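/- arXiv:1512.07655 — 4 statements merged into one kernel-verified Lean document; each statement's English description precedes it below -/
import Mathlib

section
/- Let c > 0, ε > 0 and 0 < δ ≤ εc/5 be constants and let n be sufficiently large. Let G and F be edge-disjoint graphs on the vertex set [n] such that G is d-regular with d ≥ εcn, and such that for any two sets A, B ⊆ [n] with |A| ≥ δ²n and |B| ≥ (1/2 - δ)n there is at least one edge of F between A and B. Let H be a 2-factor in G ∪ F with more than one cycle. Then there exist an edge e ∈ (G ∪ F) \ H and edges e₁', e₂' ∈ H such that H ∪ {e} \ {e₁', e₂'} is a partial HC with one fewer connected component (and one fewer edge) than H. -/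
open SimpleGraph

/-- The degree of a vertex, defined via `Set.ncard` (no decidability assumptions). -/
noncomputable def degN {V : Type*} (G : SimpleGraph V) (v : V) : ℕ :=
  (G.neighborSet v).ncard

/-- `G` is `d`-regular. -/
def IsRegN {V : Type*} (G : SimpleGraph V) (d : ℕ) : Prop :=
  ∀ v, degN G v = d

/-- `H` (a spanning subgraph, viewed as a graph on the full vertex set) is a
Hamilton cycle: it is connected and 2-regular. -/
def IsHamCycleGraph {V : Type*} (H : SimpleGraph V) : Prop :=
  H.Connected ∧ IsRegN H 2

/-- `D` is a Hamiltonian decomposition of `Γ`: a family of pairwise edge-disjoint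
Hamilton cycles whose union is `Γ`. -/
def IsHamDecomp {V : Type*} (Γ : SimpleGraph V) (D : Finset (SimpleGraph V)) : Prop :=
  (∀ H ∈ D, IsHamCycleGraph H) ∧
  (D : Set (SimpleGraph V)).Pairwise Disjoint ∧
  D.sup id = Γ

/-- The number of Hamiltonian decompositions of `Γ`. -/
noncomputable def numHamDecomp {V : Type*} (Γ : SimpleGraph V) : ℕ :=
  {D : Finset (SimpleGraph V) | IsHamDecomp Γ D}.ncard

/-- The number of edges of `G` with one endpoint in `A` and the other endpoint in `B`
(edges with both endpoints in `A ∩ B` are counted once). -/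
noncomputable def eBetween {V : Type*} (G : SimpleGraph V) (A B : Set V) : ℕ :=
  {e ∈ G.edgeSet | ∃ a ∈ A, ∃ b ∈ B, e = s(a, b)}.ncard

/-- The graph obtained from `H` by adding the edges in `add` and then deleting
the edges in `del`. -/
def modifyGraph {V : Type*} (H : SimpleGraph V) (add del : Set (Sym2 V)) : SimpleGraph V :=
  SimpleGraph.fromEdgeSet ((H.edgeSet ∪ add) \ del)

/-- The connected component `c` of `H` is a cycle (all its vertices have degree 2). -/
def IsCycleComp {V : Type*} (H : SimpleGraph V) (c : H.ConnectedComponent) : Prop :=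
  ∀ v ∈ c.supp, degN H v = 2

/-- The connected component `c` of `H` is a single (isolated) edge. -/
def IsEdgeComp {V : Type*} (H : SimpleGraph V) (c : H.ConnectedComponent) : Prop :=
  c.supp.ncard = 2

/-- The connected component `c` of `H` is a path (in a graph of maximum degree `≤ 2`:
it contains a vertex of degree at most 1). -/
def IsPathComp {V : Type*} (H : SimpleGraph V) (c : H.ConnectedComponent) : Prop :=
  ∃ v ∈ c.supp, degN H v ≤ 1

/-- `H` is a partial Hamilton cycle (partial HC): one of its connected components is
a path and all of its other components are cycles or isolated edges. -/
def IsPartialHC {V : Type*} (H : SimpleGraph V) : Prop :=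
  (∀ v, degN H v ≤ 2) ∧
  ∃ c : H.ConnectedComponent, IsPathComp H c ∧
    ∀ c' : H.ConnectedComponent, c' ≠ c → IsCycleComp H c' ∨ IsEdgeComp H c'

/-- `H` is a `(≤2)`-factor: every connected component is a cycle or an isolated edge. -/
def IsLe2Factor {V : Type*} (H : SimpleGraph V) : Prop :=
  ∀ c : H.ConnectedComponent, IsCycleComp H c ∨ IsEdgeComp H c

/-- The number of connected components of `H`. -/
noncomputable def numComp {V : Type*} (H : SimpleGraph V) : ℕ :=
  Nat.card H.ConnectedComponent

/-!
A smallest component `C` of `H` has at most `n / 2` vertices. Either a `G`-edge leaves `C`, or `C`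
contains a whole `G`-neighbourhood, so that `|C| > d ≥ ε c n ≥ δ² n` while `|Cᶜ| ≥ n / 2`, and the
expansion property of `F` yields an `F`-edge leaving `C`. Either way there is an edge `ab` of
`G ∪ F` joining two cycles of `H`. For `H`-neighbours `x` of `a` and `y` of `b`, replacing `ax` and
`by` by `ab` opens both cycles into the single path `x … a b … y` and leaves every other cycle
untouched. The deleted edges are not bridges: after deleting them, `a` has odd degree, so by the
handshake lemma its component contains another vertex of odd degree, and the only candidate is `x`.
-/
section Degree

variable {V : Type*} {G : SimpleGraph V} {u v w : V}

theorem neighborSet_deleteEdges_edge_left :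
    (G.deleteEdges {s(u, v)}).neighborSet u = G.neighborSet u \ {v} := by
  ext z
  simp only [mem_neighborSet, deleteEdges_adj, Set.mem_singleton_iff, Set.mem_sdiff]
  grind

theorem neighborSet_deleteEdges_edge_of_ne (hu : w ≠ u) (hv : w ≠ v) :
    (G.deleteEdges {s(u, v)}).neighborSet w = G.neighborSet w := by
  ext z
  simp only [mem_neighborSet, deleteEdges_adj, Set.mem_singleton_iff]
  grind

theorem neighborSet_sup_edge_left (huv : u ≠ v) :
    (G ⊔ edge u v).neighborSet u = insert v (G.neighborSet u) := by
  ext z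
  simp only [mem_neighborSet, sup_adj, edge_adj, Set.mem_insert_iff]
  grind

theorem neighborSet_sup_edge_of_ne (hu : w ≠ u) (hv : w ≠ v) :
    (G ⊔ edge u v).neighborSet w = G.neighborSet w := by
  ext z
  simp only [mem_neighborSet, sup_adj, edge_adj]
  grind

theorem degN_eq_degree [Fintype V] [DecidableRel G.Adj] :
    degN G v = G.degree v := by
  rw [degN, ← card_neighborFinset_eq_degree, neighborFinset_def, Set.ncard_eq_toFinset_card']

theorem SimpleGraph.exists_reachable_ne_odd_degree [Fintype V] [DecidableRel G.Adj]
    (hu : Odd (G.degree u)) : ∃ w ≠ u, G.Reachable u w ∧ Odd (G.degree w) := by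
  classical
  set s := (G.connectedComponentMk u).supp
  have hs : ∀ w : s, G.neighborSet w ⊆ s := fun w z hz =>
    (ConnectedComponent.connectedComponentMk_eq_of_adj hz).symm.trans w.2
  have hdeg (w : s) : (G.induce s).degree w = G.degree w := by
    convert degree_induce_of_neighborSet_subset (hs w)
  obtain ⟨w, hwu, hw⟩ := (G.induce s).exists_ne_odd_degree_of_exists_odd_degree ⟨u, rfl⟩
    (by rwa [hdeg])
  exact ⟨w, fun h => hwu (Subtype.ext h), (ConnectedComponent.exact w.2).symm, by rwa [← hdeg]⟩

variable [Finite V] [DecidableEq V]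

theorem degN_deleteEdges_add_ite (h : G.Adj u v) (w : V) :
    degN (G.deleteEdges {s(u, v)}) w + (if w = u ∨ w = v then 1 else 0) = degN G w := by
  by_cases hwu : w = u
  · subst hwu
    simpa [degN, neighborSet_deleteEdges_edge_left]
      using Set.ncard_sdiff_singleton_add_one (show v ∈ G.neighborSet w from h)
  by_cases hwv : w = v
  · subst hwv
    rw [Sym2.eq_swap, degN, neighborSet_deleteEdges_edge_left, if_pos (Or.inr rfl)]
    exact Set.ncard_sdiff_singleton_add_one (show u ∈ G.neighborSet w from h.symm)
  simp [degN, neighborSet_deleteEdges_edge_of_ne hwu hwv, hwu, hwv]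

theorem degN_sup_edge (h : ¬G.Adj u v) (huv : u ≠ v) (w : V) :
    degN (G ⊔ edge u v) w = degN G w + (if w = u ∨ w = v then 1 else 0) := by
  by_cases hwu : w = u
  · subst hwu
    simp [degN, neighborSet_sup_edge_left huv, Set.ncard_insert_of_notMem (s := G.neighborSet w) h]
  by_cases hwv : w = v
  · subst hwv
    rw [edge_comm, degN, neighborSet_sup_edge_left huv.symm, if_pos (Or.inr rfl),
      Set.ncard_insert_of_notMem (fun h' => h h'.symm)]
    rfl
  simp [degN, neighborSet_sup_edge_of_ne hwu hwv, hwu, hwv]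

end Degree

section Components

variable {V W : Type*} {G : SimpleGraph V}

theorem SimpleGraph.Reachable.map_of_forall_adj {G' : SimpleGraph W} {f : V → W}
    (hf : ∀ ⦃u v⦄, G.Adj u v → G'.Reachable (f u) (f v)) {u v : V} (huv : G.Reachable u v) :
    G'.Reachable (f u) (f v) := by
  obtain ⟨p⟩ := huv
  induction p with
  | nil => rfl
  | cons h _ ih => exact (hf h).trans ih

theorem numComp_eq_of_le_of_forall_adj {G' : SimpleGraph V} (hle : G' ≤ G)
    (h : ∀ ⦃u v⦄, G.Adj u v → G'.Reachable u v) : numComp G' = numComp G := by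
  refine Nat.card_eq_of_bijective _ ⟨?_, ConnectedComponent.surjective_map_ofLE hle⟩
  intro c c' hcc'
  induction c using ConnectedComponent.ind
  induction c' using ConnectedComponent.ind
  simp only [ConnectedComponent.map_mk, ConnectedComponent.eq] at hcc' ⊢
  exact hcc'.map_of_forall_adj (f := id) h

theorem numComp_sup_edge_add_one [Finite V] {a b : V} (hab : ¬G.Reachable a b) :
    numComp (G ⊔ edge a b) + 1 = numComp G := by
  classical
  let f (c : {c : G.ConnectedComponent // c ≠ G.connectedComponentMk b}) :
      (G ⊔ edge a b).ConnectedComponent := c.1.map (Hom.ofLE le_sup_left)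
  have hab' : (G ⊔ edge a b).Adj a b :=
    Or.inr ((edge_adj ..).2 ⟨Or.inl ⟨rfl, rfl⟩, fun h => hab (h ▸ Reachable.refl a)⟩)
  -- collapsing the component of `b` onto `a` turns walks of `G ⊔ edge a b` into walks of `G`
  have hmerge {u v : V} (huv : (G ⊔ edge a b).Reachable u v) :
      G.Reachable (if G.Reachable u b then a else u) (if G.Reachable v b then a else v) := by
    refine huv.map_of_forall_adj (f := fun w => if G.Reachable w b then a else w) fun u v h => ?_
    rcases h with h | h
    · have huv := h.reachable
      by_cases hu : G.Reachable u b
      · simp only [hu, huv.symm.trans hu, if_true, Reachable.refl]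
      · have hv : ¬G.Reachable v b := fun hv => hu (huv.trans hv)
        simpa only [hu, hv, if_false] using huv
    · obtain ⟨⟨rfl, rfl⟩ | ⟨rfl, rfl⟩, -⟩ := (edge_adj ..).1 h <;> simp [hab]
  have hf : f.Bijective := by
    constructor
    · rintro ⟨c, hc⟩ ⟨c', hc'⟩ hcc'
      induction c using ConnectedComponent.ind with | _ u => ?_
      induction c' using ConnectedComponent.ind with | _ v => ?_
      have hu : ¬G.Reachable u b := fun h => hc (ConnectedComponent.sound h)
      have hv : ¬G.Reachable v b := fun h => hc' (ConnectedComponent.sound h)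
      have := hmerge (u := u) (v := v) (ConnectedComponent.exact hcc')
      rw [if_neg hu, if_neg hv] at this
      exact Subtype.ext (ConnectedComponent.sound this)
    · intro d
      induction d using ConnectedComponent.ind with | _ v => ?_
      by_cases hvb : G.Reachable v b
      · refine ⟨⟨G.connectedComponentMk a, fun h => hab (ConnectedComponent.exact h)⟩, ?_⟩
        exact ConnectedComponent.sound (hab'.reachable.trans (hvb.symm.mono le_sup_left))
      · exact ⟨⟨G.connectedComponentMk v, fun h => hvb (ConnectedComponent.exact h)⟩, rfl⟩
  rw [numComp, numComp, ← Nat.card_eq_of_bijective f hf,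
    ← Nat.card_congr (Equiv.optionSubtypeNe (G.connectedComponentMk b)), Finite.card_option]

end Components

theorem modifyGraph_eq_deleteEdges_sup {V : Type*} (H : SimpleGraph V) (add del : Set (Sym2 V)) :
    modifyGraph H add del = H.deleteEdges del ⊔ fromEdgeSet (add \ del) := by
  ext u v
  simp only [modifyGraph, fromEdgeSet_adj, sup_adj, deleteEdges_adj, Set.mem_sdiff, Set.mem_union,
    mem_edgeSet]
  grind [Adj.ne]

section Rewiring

variable {V : Type*} [Finite V] {H : SimpleGraph V} {a b x y : V}

theorem degN_deleteEdges_pair_add_ite [DecidableEq V] (hax : H.Adj a x) (hby : H.Adj b y)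
    (hne : s(a, x) ≠ s(b, y)) (w : V) :
    degN (H.deleteEdges {s(a, x), s(b, y)}) w + (if w = a ∨ w = x then 1 else 0) +
      (if w = b ∨ w = y then 1 else 0) = degN H w := by
  have hby' : (H.deleteEdges {s(a, x)}).Adj b y := (deleteEdges_adj ..).2 ⟨hby, hne.symm⟩
  rw [Set.insert_eq, ← deleteEdges_deleteEdges, add_right_comm,
    degN_deleteEdges_add_ite hby', degN_deleteEdges_add_ite hax]

variable (hax : H.Adj a x) (hby : H.Adj b y) (hab : ¬H.Reachable a b)
include hax hby hab

omit [Finite V] in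
theorem ne_of_adj_of_not_reachable : a ≠ b ∧ a ≠ y ∧ x ≠ b ∧ x ≠ y ∧ s(a, x) ≠ s(b, y) := by
  have hx := ConnectedComponent.connectedComponentMk_eq_of_adj hax
  have hy := ConnectedComponent.connectedComponentMk_eq_of_adj hby
  have hne : H.connectedComponentMk a ≠ H.connectedComponentMk b :=
    fun h => hab (ConnectedComponent.exact h)
  refine ⟨?_, ?_, ?_, ?_, ?_⟩ <;> grind [Sym2.eq_iff]

theorem degN_deleteEdges_sup_edge_add_ite [DecidableEq V] (h2 : IsRegN H 2) (w : V) :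
    degN (H.deleteEdges {s(a, x), s(b, y)} ⊔ edge a b) w + (if w = x then 1 else 0) +
      (if w = y then 1 else 0) = 2 := by
  obtain ⟨hab', hay, hxb, hxy, hne⟩ := ne_of_adj_of_not_reachable hax hby hab
  have hnadj : ¬(H.deleteEdges {s(a, x), s(b, y)}).Adj a b :=
    fun h => hab (h.reachable.mono (deleteEdges_le _))
  have hdeg := degN_deleteEdges_pair_add_ite hax hby hne w
  rw [h2 w] at hdeg
  rw [degN_sup_edge hnadj hab']
  grind [hax.ne, hby.ne]

theorem reachable_deleteEdges_pair_left (h2 : IsRegN H 2) :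
    (H.deleteEdges {s(a, x), s(b, y)}).Reachable a x := by
  classical
  have := Fintype.ofFinite V
  obtain ⟨hab', hay, -, -, hne⟩ := ne_of_adj_of_not_reachable hax hby hab
  have hdeg w := degN_deleteEdges_pair_add_ite hax hby hne w
  simp only [h2 _, degN_eq_degree] at hdeg
  have hodd_a : Odd ((H.deleteEdges {s(a, x), s(b, y)}).degree a) := by
    have := hdeg a
    simp only [true_or, if_true, hab', hay, or_self, if_false] at this
    exact ⟨0, by omega⟩
  obtain ⟨w, hwa, hw, hodd⟩ := exists_reachable_ne_odd_degree hodd_a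
  have hw' := hw.mono (deleteEdges_le _)
  have hwb : w ≠ b := by rintro rfl; exact hab hw'
  have hwy : w ≠ y := by rintro rfl; exact hab (hw'.trans hby.symm.reachable)
  obtain rfl : w = x := by
    by_contra hwx
    have := hdeg w
    simp only [hwa, hwx, hwb, hwy, or_self, if_false, add_zero] at this
    exact Nat.not_odd_iff_even.2 (this ▸ even_two) hodd
  exact hw

theorem reachable_deleteEdges_pair_right (h2 : IsRegN H 2) :
    (H.deleteEdges {s(a, x), s(b, y)}).Reachable b y := by
  rw [Set.pair_comm]
  exact reachable_deleteEdges_pair_left hby hax (fun h => hab h.symm) h2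

omit [Finite V] in
theorem modifyGraph_eq_deleteEdges_sup_edge :
    modifyGraph H {s(a, b)} {s(a, x), s(b, y)} = H.deleteEdges {s(a, x), s(b, y)} ⊔ edge a b := by
  obtain ⟨hab', hay, hxb, -, -⟩ := ne_of_adj_of_not_reachable hax hby hab
  rw [modifyGraph_eq_deleteEdges_sup, sdiff_eq_left.2 (Set.disjoint_singleton_left.2 ?_)]
  · rfl
  simp only [Set.mem_insert_iff, Set.mem_singleton_iff, Sym2.eq_iff]
  grind

theorem numComp_deleteEdges_sup_edge_add_one (h2 : IsRegN H 2) :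
    numComp (H.deleteEdges {s(a, x), s(b, y)} ⊔ edge a b) + 1 = numComp H := by
  have hle : H.deleteEdges {s(a, x), s(b, y)} ≤ H := deleteEdges_le _
  rw [numComp_sup_edge_add_one fun h => hab (h.mono hle)]
  refine numComp_eq_of_le_of_forall_adj hle fun u v huv => ?_
  have hax' := reachable_deleteEdges_pair_left hax hby hab h2
  have hby' := reachable_deleteEdges_pair_right hax hby hab h2
  by_cases hu : s(u, v) = s(a, x)
  · rcases Sym2.eq_iff.1 hu with ⟨rfl, rfl⟩ | ⟨rfl, rfl⟩
    exacts [hax', hax'.symm]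
  by_cases hv : s(u, v) = s(b, y)
  · rcases Sym2.eq_iff.1 hv with ⟨rfl, rfl⟩ | ⟨rfl, rfl⟩
    exacts [hby', hby'.symm]
  exact Adj.reachable ((deleteEdges_adj ..).2 ⟨huv, by simp [hu, hv]⟩)

theorem isPartialHC_deleteEdges_sup_edge (h2 : IsRegN H 2) :
    IsPartialHC (H.deleteEdges {s(a, x), s(b, y)} ⊔ edge a b) := by
  classical
  obtain ⟨hab', -, -, hxy, -⟩ := ne_of_adj_of_not_reachable hax hby hab
  have hdeg := degN_deleteEdges_sup_edge_add_ite hax hby hab h2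
  set H' := H.deleteEdges {s(a, x), s(b, y)} ⊔ edge a b
  have hadj : H'.Adj a b := Or.inr ((edge_adj ..).2 ⟨Or.inl ⟨rfl, rfl⟩, hab'⟩)
  have hax' := (reachable_deleteEdges_pair_left hax hby hab h2).mono (le_sup_left : _ ≤ H')
  have hby' := (reachable_deleteEdges_pair_right hax hby hab h2).mono (le_sup_left : _ ≤ H')
  have hrxy : H'.Reachable x y := hax'.symm.trans (hadj.reachable.trans hby')
  refine ⟨fun v => ?_, H'.connectedComponentMk x, ⟨x, rfl, ?_⟩, fun c hc => Or.inl fun v hv => ?_⟩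
  · have := hdeg v
    split_ifs at this <;> omega
  · simpa [hxy] using (hdeg x).le
  · have hvx : v ≠ x := by rintro rfl; exact hc hv.symm
    have hvy : v ≠ y := by rintro rfl; exact hc (hv.symm.trans (ConnectedComponent.sound hrxy).symm)
    simpa [hvx, hvy] using hdeg v

theorem ncard_edgeSet_deleteEdges_sup_edge_add_one :
    (H.deleteEdges {s(a, x), s(b, y)} ⊔ edge a b).edgeSet.ncard + 1 = H.edgeSet.ncard := by
  obtain ⟨hab', -, -, -, hne⟩ := ne_of_adj_of_not_reachable hax hby hab
  have hnotin : s(a, b) ∉ (H.deleteEdges {s(a, x), s(b, y)}).edgeSet :=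
    fun h => hab (((deleteEdges_adj ..).1 h).1.reachable)
  have hsub : {s(a, x), s(b, y)} ⊆ H.edgeSet := Set.insert_subset_iff.2 ⟨hax, by simpa using hby⟩
  rw [edgeSet_sup, edgeSet_edge_of_ne hab', Set.union_singleton, Set.ncard_insert_of_notMem hnotin,
    edgeSet_deleteEdges, ← Set.ncard_sdiff_add_ncard_of_subset hsub, Set.ncard_pair hne]

end Rewiring

theorem exists_adj_of_one_le_eBetween {V : Type*} {F : SimpleGraph V} {A B : Set V}
    (h : 1 ≤ eBetween F A B) : ∃ a ∈ A, ∃ b ∈ B, F.Adj a b := by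
  obtain ⟨_, he, a, ha, b, hb, rfl⟩ := Set.nonempty_of_ncard_ne_zero (Nat.one_le_iff_ne_zero.1 h)
  exact ⟨a, ha, b, hb, he⟩

theorem sq_mul_le_of_le_mul_div_five {ε c δ d n : ℝ} (hδ₀ : 0 < δ) (hδ₁ : δ ≤ ε * c / 5)
    (hd : ε * (c * n) ≤ d) (hd₀ : 0 ≤ d) (hdn : d ≤ n) : δ ^ 2 * n ≤ d := by
  have hn : 0 ≤ n := hd₀.trans hdn
  have hδn : δ * n ≤ d / 5 := by nlinarith [mul_le_mul_of_nonneg_right hδ₁ hn]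
  nlinarith [mul_nonneg hδ₀.le hn]

section CrossEdge

variable {V : Type*} [Finite V]

theorem exists_two_mul_ncard_supp_le {H : SimpleGraph V} (h : 1 < numComp H) :
    ∃ C : H.ConnectedComponent, 2 * C.supp.ncard ≤ Nat.card V := by
  obtain ⟨c₁, c₂, hne⟩ := Finite.one_lt_card_iff_nontrivial.1 h
  have hunion := Set.ncard_union_eq (H.pairwise_disjoint_supp_connectedComponent hne)
  have hle := Set.ncard_le_card (c₁.supp ∪ c₂.supp)
  by_cases h₁ : 2 * c₁.supp.ncard ≤ Nat.card V
  exacts [⟨c₁, h₁⟩, ⟨c₂, by omega⟩]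

theorem lt_ncard_of_isRegN {G : SimpleGraph V} {d : ℕ} (hG : IsRegN G d) {S : Set V} {u : V}
    (hu : u ∈ S) (hS : G.neighborSet u ⊆ S) : d < S.ncard := by
  have hsub : G.neighborSet u ⊆ S \ {u} := fun v hv => ⟨hS hv, (G.ne_of_adj hv).symm⟩
  have := Set.ncard_le_ncard hsub
  have := Set.ncard_sdiff_singleton_add_one hu
  have := hG u
  rw [degN] at this
  omega

theorem exists_sup_adj_of_two_mul_ncard_le {G F : SimpleGraph V} {d : ℕ} {ε c δ : ℝ}
    (hδ₀ : 0 < δ) (hδ₁ : δ ≤ ε * c / 5) (hG : IsRegN G d) (hd : ε * (c * Nat.card V) ≤ d)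
    (hF : ∀ A B : Set V, δ ^ 2 * Nat.card V ≤ A.ncard →
      (1 / 2 - δ) * Nat.card V ≤ B.ncard → 1 ≤ eBetween F A B)
    {S : Set V} (hS : S.Nonempty) (hSn : 2 * S.ncard ≤ Nat.card V) :
    ∃ u ∈ S, ∃ v ∉ S, (G ⊔ F).Adj u v := by
  by_cases hG' : ∃ u ∈ S, ∃ v ∉ S, G.Adj u v
  · obtain ⟨u, hu, v, hv, h⟩ := hG'
    exact ⟨u, hu, v, hv, Or.inl h⟩
  push Not at hG'
  obtain ⟨u, hu⟩ := hS
  have hdS : d < S.ncard := lt_ncard_of_isRegN hG hu fun v hv => by_contra (hG' u hu v · hv)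
  have hSV : (S.ncard : ℝ) ≤ Nat.card V := by exact_mod_cast Set.ncard_le_card S
  have hdS' : (d : ℝ) < S.ncard := by exact_mod_cast hdS
  have hA : δ ^ 2 * Nat.card V ≤ S.ncard :=
    (sq_mul_le_of_le_mul_div_five hδ₀ hδ₁ hd d.cast_nonneg (hdS'.le.trans hSV)).trans hdS'.le
  have hB : (1 / 2 - δ) * Nat.card V ≤ Sᶜ.ncard := by
    have hcompl : (S.ncard : ℝ) + Sᶜ.ncard = Nat.card V := by
      exact_mod_cast Set.ncard_add_ncard_compl S
    have hSn' : 2 * (S.ncard : ℝ) ≤ Nat.card V := by exact_mod_cast hSn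
    nlinarith [mul_nonneg hδ₀.le (Nat.cast_nonneg (α := ℝ) (Nat.card V))]
  obtain ⟨u, hu, v, hv, h⟩ := exists_adj_of_one_le_eBetween (hF S Sᶜ hA hB)
  exact ⟨u, hu, v, hv, Or.inr h⟩

end CrossEdge

theorem concatenate_two_cycles_general (c ε δ : ℝ)
    (hδ₀ : 0 < δ) (hδ₁ : δ ≤ ε * c / 5) :
    ∃ n₀ : ℕ, ∀ n : ℕ, n₀ ≤ n →
      ∀ (G F : SimpleGraph (Fin n)) (d : ℕ),
        Disjoint G F → IsRegN G d → ε * (c * (n : ℝ)) ≤ (d : ℝ) →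
        (∀ A B : Set (Fin n), δ ^ 2 * (n : ℝ) ≤ (A.ncard : ℝ) →
          (1 / 2 - δ) * (n : ℝ) ≤ (B.ncard : ℝ) → 1 ≤ eBetween F A B) →
        ∀ H : SimpleGraph (Fin n), H ≤ G ⊔ F → IsRegN H 2 → 1 < numComp H →
        ∃ e ∈ (G ⊔ F).edgeSet \ H.edgeSet, ∃ e₁' ∈ H.edgeSet, ∃ e₂' ∈ H.edgeSet,
          IsPartialHC (modifyGraph H {e} {e₁', e₂'}) ∧
          numComp (modifyGraph H {e} {e₁', e₂'}) + 1 = numComp H ∧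
          (modifyGraph H {e} {e₁', e₂'}).edgeSet.ncard + 1 = H.edgeSet.ncard := by
  refine ⟨0, fun n _ G F d _ hG hd hF H _ hH hcomp => ?_⟩
  obtain ⟨C, hC⟩ := exists_two_mul_ncard_supp_le hcomp
  obtain ⟨a, ha, b, hb, hGF⟩ := exists_sup_adj_of_two_mul_ncard_le hδ₀ hδ₁ hG
    (by simpa using hd) (by simpa using hF) C.nonempty_supp hC
  have hab : ¬H.Reachable a b := fun h => hb ((ConnectedComponent.sound h).symm.trans ha)
  obtain ⟨x, hax⟩ := Set.nonempty_of_ncard_ne_zero ((hH a).trans_ne two_ne_zero)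
  obtain ⟨y, hby⟩ := Set.nonempty_of_ncard_ne_zero ((hH b).trans_ne two_ne_zero)
  refine ⟨s(a, b), ⟨hGF, fun h => hab h.reachable⟩, s(a, x), hax, s(b, y), hby, ?_⟩
  rw [modifyGraph_eq_deleteEdges_sup_edge hax hby hab]
  exact ⟨isPartialHC_deleteEdges_sup_edge hax hby hab hH,
    numComp_deleteEdges_sup_edge_add_one hax hby hab hH,
    ncard_edgeSet_deleteEdges_sup_edge_add_one hax hby hab⟩

/-- Claim 2.3 of the paper. Let `G`, `F` be edge-disjoint graphs on
`[n]` with `G` `d`-regular, `d ≥ ε c n`, and `F` having an edge between any two large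
sets. If `H` is a 2-factor of `G ∪ F` with more than one cycle, then there are an edge
`e ∈ (G ∪ F) \ H` and edges `e₁', e₂' ∈ H` such that `H ∪ {e} \ {e₁', e₂'}` is a
partial HC with one fewer component and one fewer edge than `H`. -/
theorem concatenate_two_cycles (c ε δ : ℝ) (hc : 0 < c) (hε : 0 < ε)
    (hδ₀ : 0 < δ) (hδ₁ : δ ≤ ε * c / 5) :
    ∃ n₀ : ℕ, ∀ n : ℕ, n₀ ≤ n →
      ∀ (G F : SimpleGraph (Fin n)) (d : ℕ),
        Disjoint G F → IsRegN G d → ε * (c * (n : ℝ)) ≤ (d : ℝ) →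
        (∀ A B : Set (Fin n), δ ^ 2 * (n : ℝ) ≤ (A.ncard : ℝ) →
          (1 / 2 - δ) * (n : ℝ) ≤ (B.ncard : ℝ) → 1 ≤ eBetween F A B) →
        ∀ H : SimpleGraph (Fin n), H ≤ G ⊔ F → IsRegN H 2 → 1 < numComp H →
        ∃ e ∈ (G ⊔ F).edgeSet \ H.edgeSet, ∃ e₁' ∈ H.edgeSet, ∃ e₂' ∈ H.edgeSet,
          IsPartialHC (modifyGraph H {e} {e₁', e₂'}) ∧
          numComp (modifyGraph H {e} {e₁', e₂'}) + 1 = numComp H ∧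
          (modifyGraph H {e} {e₁', e₂'}).edgeSet.ncard + 1 = H.edgeSet.ncard :=
  concatenate_two_cycles_general c ε δ hδ₀ hδ₁
end

section
/- Let 0 < δ < 1/2 and m > 0 be constants, let 0 < ν ≤ min(δ, m), and let τ satisfy 2δ ≤ τ < 1. Let R be a graph on n vertices such that there are at least mn² edges of R between any two vertex subsets A, B with |A| ≥ δ²n and |B| ≥ (1/2 - δ)n. Then R is a robust (ν,τ)-expander. -/
open SimpleGraph

/-- The robust `ν`-neighborhood of `S`: all vertices with at least `ν * n` neighbors in `S`. -/
def robustNbhd {V : Type*} [Fintype V] (G : SimpleGraph V) (ν : ℝ) (S : Set V) : Set V :=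
  {v | ν * (Fintype.card V : ℝ) ≤ (((G.neighborSet v) ∩ S).ncard : ℝ)}

/-- `G` is a robust `(ν, τ)`-expander. -/
def IsRobustExpander {V : Type*} [Fintype V] (G : SimpleGraph V) (ν τ : ℝ) : Prop :=
  ∀ S : Set V,
    τ * (Fintype.card V : ℝ) ≤ (S.ncard : ℝ) →
    (S.ncard : ℝ) ≤ (1 - τ) * (Fintype.card V : ℝ) →
    (S.ncard : ℝ) + ν * (Fintype.card V : ℝ) ≤ ((robustNbhd G ν S).ncard : ℝ)

/-!
Let `T` be the set of vertices outside the robust `ν`-neighbourhood of `S`. Each vertex of `T`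
has fewer than `νn` neighbours in `S`, so if `T` is nonempty there are fewer than
`|T| νn ≤ m n²` edges between `T` and `S`; by the density hypothesis `T` is then small.
If `|S| ≥ (1/2 - δ) n` this forces `|T| < δ² n`, and otherwise `|S| ≥ τn ≥ δ² n` forces
`|T| < (1/2 - δ) n`. In the first case `n - |T| > (1 - δ) n ≥ |S| + νn` since
`|S| ≤ (1 - τ) n ≤ (1 - 2δ) n`, and in the second `n - |T| > n / 2 > |S| + νn`.
-/

namespace SimpleGraph

variable {V : Type*} (G : SimpleGraph V)

lemma eBetween_comm (A B : Set V) : eBetween G A B = eBetween G B A := by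
  unfold eBetween
  congr 1
  ext e
  constructor <;>
  · rintro ⟨he, a, ha, b, hb, rfl⟩
    exact ⟨he, b, hb, a, ha, Sym2.eq_swap⟩

lemma eBetween_le_sum_ncard_neighborSet_inter [Finite V] (s : Finset V) (B : Set V) :
    eBetween G s B ≤ ∑ a ∈ s, (G.neighborSet a ∩ B).ncard := by
  have hsub : {e ∈ G.edgeSet | ∃ a ∈ (s : Set V), ∃ b ∈ B, e = s(a, b)} ⊆
      ⋃ a ∈ s, (fun b ↦ s(a, b)) '' (G.neighborSet a ∩ B) := by
    rintro e ⟨he, a, ha, b, hb, rfl⟩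
    exact Set.mem_biUnion ha ⟨b, ⟨he, hb⟩, rfl⟩
  calc eBetween G s B ≤ (⋃ a ∈ s, (fun b ↦ s(a, b)) '' (G.neighborSet a ∩ B)).ncard :=
        Set.ncard_le_ncard hsub
    _ ≤ ∑ a ∈ s, ((fun b ↦ s(a, b)) '' (G.neighborSet a ∩ B)).ncard :=
        s.set_ncard_biUnion_le _
    _ ≤ ∑ a ∈ s, (G.neighborSet a ∩ B).ncard :=
        Finset.sum_le_sum fun a _ ↦ Set.ncard_image_le (Set.toFinite _)

lemma eBetween_lt_of_ncard_neighborSet_inter_lt [Finite V] {A B : Set V} (hA : A.Nonempty)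
    {d : ℝ} (hd : ∀ a ∈ A, ((G.neighborSet a ∩ B).ncard : ℝ) < d) :
    (eBetween G A B : ℝ) < A.ncard * d := by
  classical
  have hfin := Set.toFinite A
  calc (eBetween G A B : ℝ) = eBetween G hfin.toFinset B := by rw [hfin.coe_toFinset]
    _ ≤ ∑ a ∈ hfin.toFinset, ((G.neighborSet a ∩ B).ncard : ℝ) := by
        exact_mod_cast eBetween_le_sum_ncard_neighborSet_inter G _ B
    _ < ∑ _a ∈ hfin.toFinset, d :=
        Finset.sum_lt_sum_of_nonempty (hfin.toFinset_nonempty.2 hA)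
          fun a ha ↦ hd a (hfin.mem_toFinset.1 ha)
    _ = A.ncard * d := by rw [Finset.sum_const, nsmul_eq_mul, Set.ncard_eq_toFinset_card A hfin]

variable [Fintype V]

lemma eBetween_compl_robustNbhd_lt {ν m : ℝ} (hν : 0 ≤ ν) (hνm : ν ≤ m) {S : Set V}
    (hT : (robustNbhd G ν S)ᶜ.Nonempty) :
    (eBetween G (robustNbhd G ν S)ᶜ S : ℝ) < m * (Fintype.card V : ℝ) ^ 2 := by
  set T := (robustNbhd G ν S)ᶜ
  have hTV : (T.ncard : ℝ) ≤ Fintype.card V := by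
    exact_mod_cast (Set.ncard_le_card T).trans_eq (Nat.card_eq_fintype_card)
  calc (eBetween G T S : ℝ) < T.ncard * (ν * Fintype.card V) :=
        eBetween_lt_of_ncard_neighborSet_inter_lt G hT fun a ha ↦ not_le.1 ha
    _ ≤ Fintype.card V * (m * Fintype.card V) := by gcongr
    _ = m * (Fintype.card V : ℝ) ^ 2 := by ring

end SimpleGraph

theorem dense_between_sets_robust_expander_general (δ m ν τ : ℝ)
    (hν₀ : 0 < ν) (hν₁ : ν ≤ min δ m)
    (hτ₀ : 2 * δ ≤ τ) (hτ₁ : τ < 1) :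
    ∀ (n : ℕ) (R : SimpleGraph (Fin n)),
      (∀ A B : Set (Fin n), δ ^ 2 * (n : ℝ) ≤ (A.ncard : ℝ) →
        (1 / 2 - δ) * (n : ℝ) ≤ (B.ncard : ℝ) →
        m * (n : ℝ) ^ 2 ≤ (eBetween R A B : ℝ)) →
      IsRobustExpander R ν τ := by
  intro n R hR S hS₁ hS₂
  set T := (robustNbhd R ν S)ᶜ
  have hcard : ((robustNbhd R ν S).ncard : ℝ) + T.ncard = n := by
    exact_mod_cast (Set.ncard_add_ncard_compl (robustNbhd R ν S)).trans (Nat.card_fin n)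
  rw [Fintype.card_fin] at hS₁ hS₂ ⊢
  have hνδ : ν ≤ δ := hν₁.trans (min_le_left _ _)
  rcases T.eq_empty_or_nonempty with hT | hT
  · rw [hT, Set.ncard_empty, Nat.cast_zero, add_zero] at hcard
    nlinarith
  have hsparse := eBetween_compl_robustNbhd_lt R hν₀.le (hν₁.trans (min_le_right _ _)) hT
  rw [Fintype.card_fin] at hsparse
  by_cases hS : (1 / 2 - δ) * (n : ℝ) ≤ S.ncard
  · have hTsmall : (T.ncard : ℝ) < δ ^ 2 * n := by
      by_contra! h
      exact hsparse.not_ge (hR T S h hS)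
    have hδ_le_one : δ ≤ 1 := by linarith
    nlinarith
  · have hTsmall : (T.ncard : ℝ) < (1 / 2 - δ) * n := by
      by_contra! h
      rw [← eBetween_comm] at hsparse
      exact hsparse.not_ge (hR S T (by nlinarith) h)
    nlinarith

/-- Let `0 < δ < 1/2`, `m > 0`, `0 < ν ≤ min(δ, m)` and
`2δ ≤ τ < 1`. If `R` is a graph on `n` vertices with at least `m n²` edges between
any two sets `A, B` with `|A| ≥ δ² n` and `|B| ≥ (1/2 - δ) n`, then `R` is a robust
`(ν, τ)`-expander. -/
theorem dense_between_sets_robust_expander (δ m ν τ : ℝ) (hδ₀ : 0 < δ)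
    (hδ₁ : δ < 1 / 2) (hm : 0 < m) (hν₀ : 0 < ν) (hν₁ : ν ≤ min δ m)
    (hτ₀ : 2 * δ ≤ τ) (hτ₁ : τ < 1) :
    ∀ (n : ℕ) (R : SimpleGraph (Fin n)),
      (∀ A B : Set (Fin n), δ ^ 2 * (n : ℝ) ≤ (A.ncard : ℝ) →
        (1 / 2 - δ) * (n : ℝ) ≤ (B.ncard : ℝ) →
        m * (n : ℝ) ^ 2 ≤ (eBetween R A B : ℝ)) →
      IsRobustExpander R ν τ :=
  dense_between_sets_robust_expander_general δ m ν τ hν₀ hν₁ hτ₀ hτ₁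
end

section
/- Every r-regular graph on n vertices (with r ≥ 1) contains at most (r!)^{n/r} Hamilton cycles. -/
/-!
Orienting a Hamilton cycle `H ≤ Γ` gives a permutation `σ` with `σ v` adjacent to `v` for all `v`,
and `H` is recovered from `σ`; so there are at most as many Hamilton cycles as such permutations,
i.e. at most the permanent of the adjacency matrix of `Γ`. Brégman's theorem bounds the permanent
of a 0-1 matrix with row sums `r i` by `∏ i, (r i)! ^ (1 / r i)`, which is `(r!) ^ (n / r)` here.

For Brégman's theorem we follow Radhakrishnan's entropy proof, with entropy replaced by its
counting form (weighted AM-GM). Let `P` be the set of permutations with `σ i ∈ N i` for all `i`.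
Choosing `σ ∈ P` row by row along an ordering `π` of the rows leaves row `i` with
`#{u | σ u ∈ N i ∧ π i ≤ π u}` choices, and the chain rule bounds `#P ^ #P` by the product of
these numbers over `σ ∈ P` and all rows. Among all orderings, the rank of `i` in the `r i`-element
set `{u | σ u ∈ N i}` is uniformly distributed, so the geometric mean of the number of choices is
`(r i)! ^ (1 / r i)`.
-/

open SimpleGraph

open Finset
open scoped Nat

-- The counting form of `H(p) ≤ log #s` for the distribution `p / ∑ p` on `s`.
theorem sum_pow_sum_le_card_pow_mul_prod_pow {ι : Type*} (s : Finset ι) (p : ι → ℕ) :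
    (∑ i ∈ s, p i) ^ (∑ i ∈ s, p i) ≤ #s ^ (∑ i ∈ s, p i) * ∏ i ∈ s, p i ^ p i := by
  set S := ∑ i ∈ s, p i
  rcases Nat.eq_zero_or_pos S with hS | hS
  · simp_all [S, sum_eq_zero_iff]
  have hSR : (0 : ℝ) < S := by exact_mod_cast hS
  -- weighted AM-GM with weights `p i / S` at the points `S / p i`
  have amgm : ∏ i ∈ s, ((S : ℝ) / p i) ^ ((p i : ℝ) / S) ≤ #s := by
    refine (Real.geom_mean_le_arith_mean_weighted s _ _ (fun i _ => by positivity)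
      (by rw [← sum_div, ← Nat.cast_sum, div_self hSR.ne'])
      (fun i _ => by positivity)).trans ?_
    calc ∑ i ∈ s, (p i : ℝ) / S * (S / p i) ≤ ∑ _i ∈ s, (1 : ℝ) := by
          refine sum_le_sum fun i _ => ?_
          rcases eq_or_ne (p i : ℝ) 0 with h | h
          · simp [h]
          · field_simp; rfl
      _ = #s := by simp
  have hpow : ∀ i ∈ s,
      (((S : ℝ) / p i) ^ ((p i : ℝ) / S)) ^ S * (p i : ℝ) ^ p i = (S : ℝ) ^ p i := by
    intro i _
    rw [← Real.rpow_natCast _ S, ← Real.rpow_mul (by positivity), div_mul_cancel₀ _ hSR.ne',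
      Real.rpow_natCast, ← mul_pow]
    rcases Nat.eq_zero_or_pos (p i) with h | h
    · simp [h]
    · rw [div_mul_cancel₀ _ (by positivity)]
  have key : (S : ℝ) ^ S ≤ (#s : ℝ) ^ S * ∏ i ∈ s, (p i : ℝ) ^ p i :=
    calc (S : ℝ) ^ S
        = (∏ i ∈ s, ((S : ℝ) / p i) ^ ((p i : ℝ) / S)) ^ S * ∏ i ∈ s, (p i : ℝ) ^ p i := by
          rw [← prod_pow, ← prod_mul_distrib, prod_congr rfl hpow,
            prod_pow_eq_pow_sum]
      _ ≤ _ := by gcongr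
  exact_mod_cast key

theorem card_pow_card_le_card_image_pow_mul_prod {α β : Type*} [DecidableEq β]
    (S : Finset α) (f : α → β) :
    #S ^ #S ≤ #(S.image f) ^ #S * ∏ b ∈ S.image f, #{a ∈ S | f a = b} ^ #{a ∈ S | f a = b} := by
  have hS : #S = ∑ b ∈ S.image f, #{a ∈ S | f a = b} :=
    card_eq_sum_card_fiberwise fun a ha => mem_image_of_mem f ha
  rw [hS]
  exact sum_pow_sum_le_card_pow_mul_prod_pow _ _

-- The counting form of the chain rule `H(σ) ≤ ∑ j, H(σ j | σ 0, …, σ (j - 1))`.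
theorem card_pow_card_le_prod_prod_card {X : Type*} :
    ∀ {n : ℕ} (S : Finset (Fin n → X)) (A : Fin n → (Fin n → X) → Finset X),
      (∀ j σ τ, (∀ k < j, σ k = τ k) → A j σ = A j τ) → (∀ σ ∈ S, ∀ j, σ j ∈ A j σ) →
      #S ^ #S ≤ ∏ σ ∈ S, ∏ j, #(A j σ)
  | 0, S, A, _, _ => by
    have : #S ≤ 1 := card_le_one_of_subsingleton S
    interval_cases h : #S <;> simp
  | n + 1, S, A, hA, hS => by
    classical
    rcases S.eq_empty_or_nonempty with rfl | ⟨σ₀, hσ₀⟩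
    · simp
    have hA₀ : ∀ σ, A 0 σ = A 0 σ₀ := fun σ => hA 0 σ σ₀ fun k hk => absurd hk (Fin.not_lt_zero k)
    have himage : S.image (· 0) ⊆ A 0 σ₀ := by
      intro x hx
      obtain ⟨σ, hσ, rfl⟩ := mem_image.mp hx
      exact hA₀ σ ▸ hS σ hσ 0
    have hfiber : ∀ x, #{σ ∈ S | σ 0 = x} ^ #{σ ∈ S | σ 0 = x}
        ≤ ∏ σ ∈ S with σ 0 = x, ∏ j : Fin n, #(A j.succ σ) := by
      intro x
      set F := {σ ∈ S | σ 0 = x}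
      have hcons : ∀ σ ∈ F, Fin.cons x (Fin.tail σ) = σ := fun σ hσ => by
        rw [← (mem_filter.mp hσ).2, Fin.cons_self_tail]
      have hinj : Set.InjOn Fin.tail (F : Set (Fin (n + 1) → X)) := fun σ hσ τ hτ h => by
        rw [← hcons σ hσ, ← hcons τ hτ, h]
      have := card_pow_card_le_prod_prod_card (F.image Fin.tail)
        (fun j g => A j.succ (Fin.cons x g))
        (fun j g g' h => hA _ _ _ fun k hk => by
          induction k using Fin.cases with
          | zero => rfl
          | succ k => exact h k (Fin.succ_lt_succ_iff.mp hk))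
        (fun g hg j => by
          obtain ⟨σ, hσ, rfl⟩ := mem_image.mp hg
          rw [hcons σ hσ]
          exact hS σ (mem_filter.mp hσ).1 j.succ)
      rwa [card_image_of_injOn hinj, prod_image hinj,
        prod_congr rfl fun σ hσ => by rw [hcons σ hσ]] at this
    calc #S ^ #S
        ≤ #(S.image (· 0)) ^ #S *
            ∏ x ∈ S.image (· 0), #{σ ∈ S | σ 0 = x} ^ #{σ ∈ S | σ 0 = x} :=
          card_pow_card_le_card_image_pow_mul_prod S (· 0)
      _ ≤ #(A 0 σ₀) ^ #S *
            ∏ x ∈ S.image (· 0), ∏ σ ∈ S with σ 0 = x, ∏ j : Fin n, #(A j.succ σ) := by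
          gcongr with x
          exact hfiber x
      _ = ∏ σ ∈ S, ∏ j, #(A j σ) := by
          have hfib := prod_fiberwise_of_maps_to (s := S) (g := fun σ : Fin (n + 1) → X => σ 0)
            (fun σ hσ => mem_image_of_mem _ hσ) fun σ => ∏ j : Fin n, #(A j.succ σ)
          simp_rw [hfib, Fin.prod_univ_succ, prod_mul_distrib, hA₀, prod_const]

theorem card_pow_card_le_prod_prod_card_of_equiv {ι X : Type*} [Fintype ι] {n : ℕ}
    (π : ι ≃ Fin n) (S : Finset (ι → X)) (A : ι → (ι → X) → Finset X)
    (hA : ∀ i σ τ, (∀ u, π u < π i → σ u = τ u) → A i σ = A i τ)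
    (hS : ∀ σ ∈ S, ∀ i, σ i ∈ A i σ) :
    #S ^ #S ≤ ∏ σ ∈ S, ∏ i, #(A i σ) := by
  have hinj : Function.Injective fun σ : ι → X => σ ∘ π.symm := fun σ τ h =>
    funext fun i => by simpa using congrFun h (π i)
  have := card_pow_card_le_prod_prod_card (S.map ⟨_, hinj⟩) (fun j g => A (π.symm j) (g ∘ π))
    (fun j g g' h => hA _ _ _ fun u hu => h (π u) (by simpa using hu))
    (fun g hg j => by
      obtain ⟨σ, hσ, rfl⟩ := mem_map.mp hg
      simpa [Function.comp_def] using hS σ hσ (π.symm j))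
  rw [card_map, prod_map] at this
  convert this using 2 with σ
  exact (π.symm.prod_comp fun i => #(A i σ)).symm.trans (by simp [Function.comp_def])

theorem prod_card_filter_le_eq_factorial {α : Type*} [LinearOrder α] (s : Finset α) :
    ∏ a ∈ s, #{b ∈ s | a ≤ b} = (#s)! := by
  induction s using Finset.induction_on_min with
  | empty => simp
  | insert a s ha ih =>
    have ha' : a ∉ s := fun h => (ha a h).false
    have hmin : {b ∈ insert a s | a ≤ b} = insert a s :=
      filter_true_of_mem fun b hb => (mem_insert.mp hb).elim ge_of_eq fun hb => (ha b hb).le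
    have hrest : ∀ x ∈ s, #{b ∈ insert a s | x ≤ b} = #{b ∈ s | x ≤ b} := fun x hx => by
      rw [filter_insert, if_neg (ha x hx).not_ge]
    rw [prod_insert ha', prod_congr rfl hrest, ih, hmin, card_insert_of_notMem ha',
      Nat.factorial_succ]

theorem prod_card_filter_map_le_eq_factorial {ι β : Type*} [LinearOrder β] (π : ι ≃ β)
    (T : Finset ι) : ∏ i ∈ T, #{u ∈ T | π i ≤ π u} = (#T)! := by
  classical
  rw [← card_map π.toEmbedding, ← prod_card_filter_le_eq_factorial, prod_map]
  refine prod_congr rfl fun i _ => ?_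
  rw [filter_map, card_map]
  rfl

section

variable {ι : Type*} [Fintype ι] [DecidableEq ι]

theorem prod_equiv_card_filter_le_eq {β : Type*} [LinearOrder β] [Fintype β] (T : Finset ι)
    {i j : ι} (hi : i ∈ T) (hj : j ∈ T) :
    ∏ π : ι ≃ β, #{u ∈ T | π i ≤ π u} = ∏ π : ι ≃ β, #{u ∈ T | π j ≤ π u} := by
  let τ := Equiv.swap i j
  have hτ : ∀ u, τ u ∈ T ↔ u ∈ T := fun u => by
    rw [Equiv.swap_apply_def]
    split_ifs <;> simp_all
  -- precomposing the order with the transposition of `i` and `j` exchanges their roles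
  refine Fintype.prod_equiv (Equiv.equivCongr τ (Equiv.refl β)) _ _ fun π => ?_
  refine card_nbij' τ τ (fun u hu => ?_) (fun u hu => ?_) (fun u _ => by simp [τ])
    (fun u _ => by simp [τ])
  · simp_all [τ]
  · simp_all [τ]

theorem prod_equiv_card_filter_le_pow_card {β : Type*} [LinearOrder β] [Fintype β]
    (T : Finset ι) {i : ι} (hi : i ∈ T) :
    (∏ π : ι ≃ β, #{u ∈ T | π i ≤ π u}) ^ #T = (#T)! ^ Fintype.card (ι ≃ β) := by
  calc (∏ π : ι ≃ β, #{u ∈ T | π i ≤ π u}) ^ #T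
      = ∏ j ∈ T, ∏ π : ι ≃ β, #{u ∈ T | π j ≤ π u} := by
        rw [← prod_const, prod_congr rfl fun j hj => prod_equiv_card_filter_le_eq T hi hj]
    _ = ∏ π : ι ≃ β, (#T)! := by
        rw [prod_comm]
        exact prod_congr rfl fun π _ => prod_card_filter_map_le_eq_factorial π T
    _ = (#T)! ^ Fintype.card (ι ≃ β) := by rw [prod_const, card_univ]

/-- `#(admissiblePerms N)` is the permanent of the 0-1 matrix whose `i`-th row is supported on
`N i`. -/
def admissiblePerms (N : ι → Finset ι) : Finset (Equiv.Perm ι) := {σ | ∀ i, σ i ∈ N i}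

theorem card_admissiblePerms_pow_card_le {n : ℕ} (N : ι → Finset ι) (π : ι ≃ Fin n) :
    #(admissiblePerms N) ^ #(admissiblePerms N) ≤
      ∏ σ ∈ admissiblePerms N, ∏ i, #{u | σ u ∈ N i ∧ π i ≤ π u} := by
  -- along the order `π`, the value `σ i` avoids the values `σ u` already taken
  have := card_pow_card_le_prod_prod_card_of_equiv π ((admissiblePerms N).image (⇑))
    (fun i f => N i \ ({u | π u < π i} : Finset ι).image f)
    (fun i f g h => by
      rw [image_congr fun u hu => h u (mem_filter.mp hu).2])
    (fun f hf i => by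
      obtain ⟨σ, hσ, rfl⟩ := mem_image.mp hf
      simp only [mem_sdiff, mem_image, mem_filter, mem_univ, true_and, not_exists, not_and]
      exact ⟨(mem_filter.mp hσ).2 i, fun u hu h => (σ.injective h ▸ hu).false⟩)
  rw [card_image_of_injective _ DFunLike.coe_injective,
    prod_image fun σ _ τ _ h => DFunLike.coe_injective h] at this
  refine this.trans_eq (prod_congr rfl fun σ _ => prod_congr rfl fun i _ => ?_)
  rw [eq_comm, ← card_image_of_injective _ σ.injective]
  congr 1
  ext v
  simp only [mem_sdiff, mem_image, mem_filter, mem_univ, true_and, not_exists, not_and]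
  constructor
  · rintro ⟨u, ⟨hu, hπu⟩, rfl⟩
    exact ⟨hu, fun w hw h => (σ.injective h ▸ hw).not_ge hπu⟩
  · rintro ⟨hv, hlt⟩
    exact ⟨σ.symm v, ⟨by simpa using hv, not_lt.mp fun h => hlt _ h (by simp)⟩, by simp⟩

theorem prod_equiv_card_filter_eq_rpow {N : ι → Finset ι} {σ : Equiv.Perm ι}
    (hσ : σ ∈ admissiblePerms N) (i : ι) :
    (∏ π : ι ≃ Fin (Fintype.card ι), #{u | σ u ∈ N i ∧ π i ≤ π u} : ℝ) =
      (((#(N i))! : ℝ) ^ ((#(N i) : ℝ)⁻¹)) ^ (Fintype.card ι)! := by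
  set T : Finset ι := {u | σ u ∈ N i}
  have hT : #T = #(N i) := by
    rw [← card_map σ.toEmbedding]
    congr 1
    ext v
    simp [T]
  have hiT : i ∈ T := by simpa [T, admissiblePerms] using (mem_filter.mp hσ).2 i
  have hr : #(N i) ≠ 0 := hT ▸ card_ne_zero_of_mem hiT
  have := prod_equiv_card_filter_le_pow_card (β := Fin (Fintype.card ι)) T hiT
  rw [hT, Fintype.card_equiv (Fintype.equivFin ι)] at this
  simp only [T, filter_filter] at this
  refine (pow_left_inj₀ (prod_nonneg fun _ _ => Nat.cast_nonneg _)
    (pow_nonneg (by positivity) _) hr).mp ?_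
  rw [← pow_mul, mul_comm, pow_mul, Real.rpow_inv_natCast_pow (by positivity) hr]
  exact_mod_cast this

theorem card_admissiblePerms_le (N : ι → Finset ι) :
    (#(admissiblePerms N) : ℝ) ≤ ∏ i, ((#(N i))! : ℝ) ^ ((#(N i) : ℝ)⁻¹) := by
  set P := admissiblePerms N
  set b : ι → ℝ := fun i => ((#(N i))! : ℝ) ^ ((#(N i) : ℝ)⁻¹)
  set m := (Fintype.card ι)!
  rcases P.eq_empty_or_nonempty with hP | hP
  · rw [hP, card_empty, Nat.cast_zero]
    positivity
  refine le_of_pow_le_pow_left₀ (n := #P * m) (by positivity) (by positivity) ?_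
  calc (#P : ℝ) ^ (#P * m) = ∏ _π : ι ≃ Fin (Fintype.card ι), ((#P ^ #P : ℕ) : ℝ) := by
        rw [prod_const, card_univ, Fintype.card_equiv (Fintype.equivFin ι), pow_mul]
        push_cast; rfl
    _ ≤ ∏ π : ι ≃ Fin (Fintype.card ι), ∏ σ ∈ P, ∏ i, (#{u | σ u ∈ N i ∧ π i ≤ π u} : ℝ) := by
        gcongr with π
        exact_mod_cast card_admissiblePerms_pow_card_le N π
    _ = ∏ σ ∈ P, ∏ i, ∏ π : ι ≃ Fin (Fintype.card ι), (#{u | σ u ∈ N i ∧ π i ≤ π u} : ℝ) := by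
        rw [prod_comm]
        exact prod_congr rfl fun σ _ => prod_comm
    _ = ∏ _σ ∈ P, ∏ i, b i ^ m := by
        refine prod_congr rfl fun σ hσ => prod_congr rfl fun i _ => ?_
        exact_mod_cast prod_equiv_card_filter_eq_rpow hσ i
    _ = (∏ i, b i) ^ (#P * m) := by rw [prod_const, prod_pow, ← pow_mul, mul_comm]

end

theorem SimpleGraph.Walk.IsCycle.exists_perm_toSubgraph_adj_iff {V : Type*} {G : SimpleGraph V}
    {v : V} {p : G.Walk v v} (hp : p.IsCycle) (hsupp : ∀ w, w ∈ p.support) :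
    ∃ σ : Equiv.Perm V, ∀ a b, p.toSubgraph.Adj a b ↔ b = σ a ∨ a = σ b := by
  set L := p.length
  have hL : 0 < L := by have := hp.three_le_length; omega
  have hinj : Function.Injective fun i : Fin L => p.getVert i := fun i j h =>
    Fin.ext (hp.getVert_injOn' (by simp; omega) (by simp; omega) h)
  have hsurj : Function.Surjective fun i : Fin L => p.getVert i := fun w => by
    obtain ⟨k, rfl, hk⟩ := mem_support_iff_exists_getVert.mp (hsupp w)
    rcases hk.lt_or_eq with hk | rfl
    · exact ⟨⟨k, hk⟩, rfl⟩
    · exact ⟨⟨0, hL⟩, by simp⟩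
  -- `E` enumerates the cycle, and `σ` moves each vertex one step along it
  set E := Equiv.ofBijective _ ⟨hinj, hsurj⟩
  set σ := E.symm.trans ((finRotate L).trans E)
  have hσ : ∀ i : Fin L, σ (p.getVert i) = p.getVert (i + 1) := fun i => by
    have hrot : ((finRotate L i : Fin L) : ℕ) = (i + 1) % L := by
      have := Fin.pos_iff_nonempty.mp hL
      simp [finRotate_apply, Fin.val_add]
    change p.getVert (finRotate L (E.symm (E i)) : ℕ) = _
    rw [E.symm_apply_apply, hrot]
    rcases (show (i : ℕ) + 1 ≤ L from i.isLt).lt_or_eq with h | h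
    · rw [Nat.mod_eq_of_lt h]
    · rw [h, Nat.mod_self, getVert_zero, getVert_length]
  have hadj : ∀ a b, p.toSubgraph.Adj a b ↔ ∃ x, s(x, σ x) = s(a, b) := fun a b => by
    rw [toSubgraph_adj_iff]
    constructor
    · rintro ⟨k, hs, hk⟩
      exact ⟨p.getVert k, by rwa [hσ ⟨k, hk⟩]⟩
    · rintro ⟨x, hx⟩
      obtain ⟨i, rfl⟩ := hsurj x
      exact ⟨i, by rwa [← hσ i], i.isLt⟩
  refine ⟨σ, fun a b => (hadj a b).trans ⟨?_, ?_⟩⟩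
  · rintro ⟨x, hx⟩
    rcases Sym2.eq_iff.mp hx with ⟨rfl, rfl⟩ | ⟨rfl, rfl⟩
    exacts [Or.inl rfl, Or.inr rfl]
  · rintro (rfl | rfl)
    exacts [⟨a, rfl⟩, ⟨b, Sym2.eq_swap⟩]

theorem IsHamCycleGraph.exists_perm_adj_iff {V : Type*} [Finite V] {H : SimpleGraph V}
    (hH : IsHamCycleGraph H) : ∃ σ : Equiv.Perm V, ∀ u w, H.Adj u w ↔ w = σ u ∨ u = σ w := by
  have := Fintype.ofFinite V
  classical
  obtain ⟨hconn, hdeg⟩ := hH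
  have hcyc : H.IsCycles := fun v _ => hdeg v
  obtain ⟨v⟩ := hconn.nonempty
  have hv : (H.neighborSet v).Nonempty :=
    Set.nonempty_of_ncard_ne_zero (by rw [show (H.neighborSet v).ncard = 2 from hdeg v]; norm_num)
  obtain ⟨p, hp, hverts⟩ := hcyc.exists_cycle_toSubgraph_verts_eq_connectedComponentSupp
    (c := H.connectedComponentMk v) rfl hv
  have hverts : ∀ w, w ∈ p.toSubgraph.verts := fun w => by
    rw [hverts, ConnectedComponent.mem_supp_iff, ConnectedComponent.eq]
    exact hconn.preconnected w v
  obtain ⟨σ, hσ⟩ := hp.exists_perm_toSubgraph_adj_iff fun w => p.mem_verts_toSubgraph.mp (hverts w)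
  exact ⟨σ, fun u w => by rw [← hp.adj_toSubgraph_iff_of_isCycles hcyc (hverts u), hσ]⟩

theorem ncard_hamCycles_le_card_admissiblePerms {V : Type*} [Fintype V] [DecidableEq V]
    (Γ : SimpleGraph V) [DecidableRel Γ.Adj] :
    {H : SimpleGraph V | H ≤ Γ ∧ IsHamCycleGraph H}.ncard ≤
      #(admissiblePerms fun v => Γ.neighborFinset v) := by
  classical
  set graphOf : Equiv.Perm V → SimpleGraph V := fun σ => fromRel fun u v => v = σ u
  have hsub : {H : SimpleGraph V | H ≤ Γ ∧ IsHamCycleGraph H} ⊆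
      ((admissiblePerms (fun v => Γ.neighborFinset v)).image graphOf : Set (SimpleGraph V)) := by
    rintro H ⟨hle, hH⟩
    obtain ⟨σ, hσ⟩ := hH.exists_perm_adj_iff
    refine mem_image.mpr ⟨σ, ?_, ?_⟩
    · simpa [admissiblePerms] using fun v => hle ((hσ v (σ v)).mpr (Or.inl rfl))
    · ext u v
      simpa [graphOf, hσ, eq_comm] using fun h => (H.ne_of_adj ((hσ u v).mpr h))
  calc _ ≤ #((admissiblePerms (fun v => Γ.neighborFinset v)).image graphOf) := by
        rw [← Set.ncard_coe_finset]
        exact Set.ncard_le_ncard hsub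
    _ ≤ _ := card_image_le

theorem bregman_hamilton_cycle_bound_general (n r : ℕ)
    (Γ : SimpleGraph (Fin n)) (hreg : IsRegN Γ r) :
    (({H : SimpleGraph (Fin n) | H ≤ Γ ∧ IsHamCycleGraph H}).ncard : ℝ) ≤
      ((r.factorial : ℝ)) ^ ((n : ℝ) / (r : ℝ)) := by
  classical
  have hdeg : ∀ v, #(Γ.neighborFinset v) = r := fun v => by
    rw [← hreg v, degN, ← Set.ncard_coe_finset, coe_neighborFinset]
  calc _ ≤ (#(admissiblePerms (fun v => Γ.neighborFinset v)) : ℝ) := by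
        exact_mod_cast ncard_hamCycles_le_card_admissiblePerms Γ
    _ ≤ ∏ v, ((#(Γ.neighborFinset v))! : ℝ) ^ ((#(Γ.neighborFinset v) : ℝ)⁻¹) :=
        card_admissiblePerms_le _
    _ = ((r ! : ℝ) ^ (r : ℝ)⁻¹) ^ n := by simp [hdeg]
    _ = _ := by rw [← Real.rpow_natCast, ← Real.rpow_mul (by positivity), div_eq_inv_mul]

/-- Brégman bound. Every `r`-regular graph on `n` vertices
(`r ≥ 1`) contains at most `(r!)^(n/r)` Hamilton cycles. -/
theorem bregman_hamilton_cycle_bound (n r : ℕ) (hr : 1 ≤ r)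
    (Γ : SimpleGraph (Fin n)) (hreg : IsRegN Γ r) :
    (({H : SimpleGraph (Fin n) | H ≤ Γ ∧ IsHamCycleGraph H}).ncard : ℝ) ≤
      ((r.factorial : ℝ)) ^ ((n : ℝ) / (r : ℝ)) :=
  bregman_hamilton_cycle_bound_general n r Γ hreg
end

section
/- Let ε₀, γ₀ > 0 be constants with c₀ ≥ ε₀, let d = ⌈(c₀ - ε₀)n/2⌉, and let n be sufficiently large. Let D be a directed graph on n vertices such that every vertex has in-degree and out-degree between c₀n/2 - n^{2/3} and c₀n/2 + n^{2/3}, and such that for every two vertex subsets A, B with |A| ≥ c₀n/3 and |B| ≥ n/2 there are at least γ₀n²/3 directed edges from A to B and at least γ₀n²/3 directed edges from B to A. Then D contains a spanning subdigraph in which every vertex has in-degree and out-degree exactly d. -/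
/-- The out-degree of a vertex of a digraph. -/
noncomputable def outDeg {V : Type*} (D : Digraph V) (v : V) : ℕ :=
  {w | D.Adj v w}.ncard

/-- The in-degree of a vertex of a digraph. -/
noncomputable def inDeg {V : Type*} (D : Digraph V) (v : V) : ℕ :=
  {w | D.Adj w v}.ncard

/-- The number of directed edges of `D` with tail in `A` and head in `B`. -/
noncomputable def dEdges {V : Type*} (D : Digraph V) (A B : Set V) : ℕ :=
  {p : V × V | D.Adj p.1 p.2 ∧ p.1 ∈ A ∧ p.2 ∈ B}.ncard

/-!
A `d`-regular spanning subdigraph is a `d`-factor of the bipartite "out-copy / in-copy" graph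
of `D`. Such a factor exists once every two vertex sets `S, T` span at least
`d (|S| + |T| - n)` arcs from `S` to `T`: in a largest subgraph with all degrees at most `d`
that is not yet a factor, the vertices joined by alternating paths to an out-deficient vertex
and their non-`F` out-neighbours form a pair violating this cut condition.

The cut condition follows from the hypotheses. If `S` or `T` has fewer than `c₀ n / 3`
vertices, the minimum degree alone gives enough arcs. Otherwise, when the excess
`|S| + |T| - n` is below `O(n^{2/3})`, the expansion hypothesis supplies `γ₀ n² / 3` arcs; when
it is larger, the gap of at least `ε₀ n / 4` between the minimum degree and `d` pays for the
`O(n^{5/3})` arcs that the degree deviations allow into the complement of `T`.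
-/

open Finset Filter

section CardFilter

variable {α β : Type*} [DecidableEq α] [DecidableEq β] {s : Finset α} {a b : α}

lemma card_filter_insert_of_notMem (ha : a ∉ s) (f : α → β) (z : β) :
    #{p ∈ insert a s | f p = z} = #{p ∈ s | f p = z} + if f a = z then 1 else 0 := by
  rw [filter_insert]
  split_ifs <;> simp [card_insert_of_notMem, ha]

lemma card_filter_erase_of_mem (hb : b ∈ s) (f : α → β) (z : β) :
    #{p ∈ s.erase b | f p = z} + (if f b = z then 1 else 0) = #{p ∈ s | f p = z} := by
  rw [filter_erase]
  split_ifs with h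
  · exact card_erase_add_one (mem_filter.2 ⟨hb, h⟩)
  · simp [h]

lemma card_filter_insert_erase (ha : a ∉ s) (hb : b ∈ s) (f : α → β) (z : β) :
    #{p ∈ insert a (s.erase b) | f p = z} + (if f b = z then 1 else 0) =
      #{p ∈ s | f p = z} + if f a = z then 1 else 0 := by
  rw [card_filter_insert_of_notMem (fun h => ha (mem_of_mem_erase h)), add_right_comm,
    card_filter_erase_of_mem hb]

end CardFilter

lemma card_filter_and_add_card_filter_and_not {α : Type*} (s : Finset α) (P Q : α → Prop)
    [DecidablePred P] [DecidablePred Q] :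
    #{a ∈ s | P a ∧ Q a} + #{a ∈ s | P a ∧ ¬Q a} = #{a ∈ s | P a} := by
  rw [← filter_filter, ← filter_filter]
  exact card_filter_add_card_filter_not _

lemma card_arcs_le_mul {V : Type*} [DecidableEq V] (E : Finset (V × V)) (S T : Finset V) :
    #{p ∈ E | p.1 ∈ S ∧ p.2 ∈ T} ≤ #S * #T := by
  rw [← card_product]
  exact card_le_card fun p hp => mem_product.2 (mem_filter.1 hp).2

section Factor

variable {V : Type*} [DecidableEq V] {d : ℕ} {E F : Finset (V × V)}

def IsPartialFactor (d : ℕ) (E F : Finset (V × V)) : Prop :=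
  F ⊆ E ∧ ∀ v, #{p ∈ F | p.1 = v} ≤ d ∧ #{p ∈ F | p.2 = v} ≤ d

/-- `AltReach d E F k x`: from `x` an out-deficient vertex of `F` is reached in at most `k`
steps `x → y ← x'` with `(x, y) ∈ F` and `(x', y) ∈ E \ F`. -/
inductive AltReach (d : ℕ) (E F : Finset (V × V)) : ℕ → V → Prop
  | deficient {k : ℕ} {x : V} : #{p ∈ F | p.1 = x} < d → AltReach d E F k x
  | step {k : ℕ} {x x' y : V} : (x, y) ∈ F → (x', y) ∈ E → (x', y) ∉ F →
      AltReach d E F k x' → AltReach d E F (k + 1) x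

lemma AltReach.succ {k : ℕ} {x : V} (h : AltReach d E F k x) : AltReach d E F (k + 1) x := by
  induction h with
  | deficient h => exact .deficient h
  | step hxy hx'y hx'yF _ ih => exact .step hxy hx'y hx'yF ih

lemma IsPartialFactor.insert_arc (hF : IsPartialFactor d E F) {x y : V} (hxy : (x, y) ∈ E)
    (hxyF : (x, y) ∉ F) (hx : #{p ∈ F | p.1 = x} < d) (hy : #{p ∈ F | p.2 = y} < d) :
    IsPartialFactor d E (insert (x, y) F) := by
  refine ⟨insert_subset hxy hF.1, fun v => ?_⟩
  rw [card_filter_insert_of_notMem hxyF, card_filter_insert_of_notMem hxyF]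
  have := hF.2 v
  constructor <;> split_ifs with h <;> simp only at h <;> first | omega | (subst h; omega)

section Flip

variable {x y y₁ : V}

lemma mem_flip_of_ne {a b : V} (ha : a ≠ x) :
    (a, b) ∈ insert (x, y) (F.erase (x, y₁)) ↔ (a, b) ∈ F := by
  simp [ha]

lemma card_flip_filter_fst (hxy : (x, y) ∉ F) (hxy₁ : (x, y₁) ∈ F) (v : V) :
    #{p ∈ insert (x, y) (F.erase (x, y₁)) | p.1 = v} = #{p ∈ F | p.1 = v} := by
  have := card_filter_insert_erase hxy hxy₁ Prod.fst v
  simp only at this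
  omega

lemma IsPartialFactor.flip (hF : IsPartialFactor d E F) (hxyE : (x, y) ∈ E) (hxy : (x, y) ∉ F)
    (hxy₁ : (x, y₁) ∈ F) (hy : #{p ∈ F | p.2 = y} < d) :
    IsPartialFactor d E (insert (x, y) (F.erase (x, y₁))) ∧
      #{p ∈ insert (x, y) (F.erase (x, y₁)) | p.2 = y₁} < d := by
  have hne : y ≠ y₁ := by rintro rfl; exact hxy hxy₁
  have hin := card_filter_insert_erase hxy hxy₁ Prod.snd
  refine ⟨⟨insert_subset hxyE ((erase_subset _ _).trans hF.1), fun v => ?_⟩, ?_⟩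
  · rw [card_flip_filter_fst hxy hxy₁]
    refine ⟨(hF.2 v).1, ?_⟩
    have hv := hin v
    have := (hF.2 v).2
    simp only at hv
    split_ifs at hv with h h' <;> subst_vars <;> omega
  · have hy₁ := hin y₁
    simp only [hne, if_true, if_false] at hy₁
    have := (hF.2 y₁).2
    omega

lemma AltReach.flip (hxy : (x, y) ∉ F) (hxy₁ : (x, y₁) ∈ F) {k : ℕ} {z : V}
    (h : AltReach d E F k z) :
    AltReach d E F k x ∨ AltReach d E (insert (x, y) (F.erase (x, y₁))) k z := by
  induction h with
  | deficient hz => exact .inr (.deficient ((card_flip_filter_fst hxy hxy₁ _).symm ▸ hz))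
  | @step k z z' w hzw hz'w hz'wF hz' ih =>
    rcases ih with ih | ih
    · exact .inl ih.succ
    by_cases hz : z = x
    · exact .inl (hz ▸ .step hzw hz'w hz'wF hz')
    by_cases hz'x : z' = x
    · exact .inl (hz'x ▸ hz').succ
    exact .inr (.step ((mem_flip_of_ne hz).2 hzw) hz'w (mt (mem_flip_of_ne hz'x).1 hz'wF) ih)

end Flip

lemma IsPartialFactor.exists_card_succ {k : ℕ} {x y : V} (hF : IsPartialFactor d E F)
    (hx : AltReach d E F k x) (hxyE : (x, y) ∈ E) (hxy : (x, y) ∉ F)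
    (hy : #{p ∈ F | p.2 = y} < d) :
    ∃ F', IsPartialFactor d E F' ∧ #F' = #F + 1 := by
  induction k using Nat.strong_induction_on generalizing F x y with
  | _ k ih =>
  by_cases hmin : ∃ j < k, AltReach d E F j x
  · obtain ⟨j, hj, hx⟩ := hmin
    exact ih j hj hF hx hxyE hxy hy
  push Not at hmin
  cases hx with
  | deficient hx => exact ⟨_, hF.insert_arc hxyE hxy hx hy, card_insert_of_notMem hxy⟩
  | @step j _ x' y₁ hxy₁ hx'y₁ hx'y₁F hx' =>
    have hx'x : x' ≠ x := by rintro rfl; exact hmin j (Nat.lt_succ_self j) hx'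
    obtain ⟨hF₂, hy₁⟩ := hF.flip hxyE hxy hxy₁ hy
    rcases hx'.flip hxy hxy₁ with hx | hx'
    · exact absurd hx (hmin j (Nat.lt_succ_self j))
    obtain ⟨F', hF', hcard⟩ := ih j (Nat.lt_succ_self j) hF₂ hx' hx'y₁
      (mt (mem_flip_of_ne hx'x).1 hx'y₁F) hy₁
    refine ⟨F', hF', ?_⟩
    rw [hcard, card_insert_of_notMem (fun h => hxy (mem_of_mem_erase h)),
      card_erase_add_one hxy₁]

variable [Fintype V]

lemma IsPartialFactor.card_filter_fst_eq
    (hcut : ∀ S T : Finset V,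
      d * (#S + #T) ≤ #{p ∈ E | p.1 ∈ S ∧ p.2 ∈ T} + d * Fintype.card V)
    (hF : IsPartialFactor d E F) (hmax : ∀ F', IsPartialFactor d E F' → #F' ≤ #F) (x : V) :
    #{p ∈ F | p.1 = x} = d := by
  classical
  by_contra hx
  replace hx : #{p ∈ F | p.1 = x} < d := lt_of_le_of_ne (hF.2 x).1 hx
  -- `Q` is saturated by maximality of `F`, and then the cut condition fails for `(R, Qᶜ)`.
  set R : Finset V := {v | ∃ k, AltReach d E F k v}
  set Q : Finset V := {y | ∃ v ∈ R, (v, y) ∈ E ∧ (v, y) ∉ F}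
  have hxR : x ∈ R := by simpa [R] using ⟨0, .deficient hx⟩
  have hQ : ∀ y ∈ Q, #{p ∈ F | p.2 = y} = d := by
    intro y hy
    simp only [Q, R, mem_filter, mem_univ, true_and] at hy
    obtain ⟨v, ⟨k, hv⟩, hvyE, hvy⟩ := hy
    by_contra hne
    obtain ⟨F', hF', hcard⟩ := hF.exists_card_succ hv hvyE hvy (lt_of_le_of_ne (hF.2 y).2 hne)
    have := hmax F' hF'
    omega
  have hFQ : #{p ∈ F | p.1 ∈ R ∧ p.2 ∈ Q} = #{p ∈ F | p.2 ∈ Q} := by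
    refine congrArg card (filter_congr fun p hp => and_iff_right_of_imp fun hpQ => ?_)
    simp only [Q, R, mem_filter, mem_univ, true_and] at hpQ ⊢
    obtain ⟨v, ⟨k, hv⟩, hvE, hvF⟩ := hpQ
    exact ⟨k + 1, .step hp hvE hvF hv⟩
  have hEF : #{p ∈ E | p.1 ∈ R ∧ p.2 ∈ Qᶜ} = #{p ∈ F | p.1 ∈ R ∧ p.2 ∈ Qᶜ} := by
    congr 1
    ext p
    simp only [mem_filter, mem_compl]
    refine ⟨fun ⟨hpE, hpR, hpQ⟩ => ⟨?_, hpR, hpQ⟩, fun ⟨hpF, hpR, hpQ⟩ => ⟨hF.1 hpF, hpR, hpQ⟩⟩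
    by_contra hpF
    exact hpQ (mem_filter.2 ⟨mem_univ _, p.1, hpR, hpE, hpF⟩)
  have hRout : #{p ∈ F | p.1 ∈ R} < d * #R := by
    rw [← sum_card_fiberwise_eq_card_filter, mul_comm, ← smul_eq_mul, ← sum_const]
    exact sum_lt_sum (fun v _ => (hF.2 v).1) ⟨x, hxR, hx⟩
  have hQin : #{p ∈ F | p.2 ∈ Q} = d * #Q := by
    rw [← sum_card_fiberwise_eq_card_filter, sum_const_nat hQ, mul_comm]
  have hsplit := card_filter_and_add_card_filter_and_not F (·.1 ∈ R) (·.2 ∈ Q)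
  have hcutRQ := hcut R Qᶜ
  rw [← card_add_card_compl Q, mul_add] at hcutRQ
  simp only [mem_compl] at hEF hcutRQ
  linarith

theorem exists_factor_of_cut
    (hcut : ∀ S T : Finset V,
      d * (#S + #T) ≤ #{p ∈ E | p.1 ∈ S ∧ p.2 ∈ T} + d * Fintype.card V) :
    ∃ F ⊆ E, ∀ v, #{p ∈ F | p.2 = v} = d ∧ #{p ∈ F | p.1 = v} = d := by
  classical
  obtain ⟨F, hFmem, hmax⟩ := (E.powerset.filter (IsPartialFactor d E)).exists_max_image card
    ⟨∅, mem_filter.2 ⟨empty_mem_powerset E, empty_subset E, by simp⟩⟩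
  have hF : IsPartialFactor d E F := (mem_filter.1 hFmem).2
  have hout := hF.card_filter_fst_eq hcut
    fun F' hF' => hmax F' (mem_filter.2 ⟨mem_powerset.2 hF'.1, hF'⟩)
  have hsum : ∑ v, #{p ∈ F | p.2 = v} = ∑ _v : V, d := by
    rw [sum_card_fiberwise_eq_card_filter, ← sum_congr rfl fun v _ => hout v,
      sum_card_fiberwise_eq_card_filter]
    simp
  have hin := (sum_eq_sum_iff_of_le fun v _ => (hF.2 v).2).1 hsum
  exact ⟨F, hF.1, fun v => ⟨hin v (mem_univ v), hout v⟩⟩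

end Factor

lemma cut_inequality {d m β c γ N s t e : ℝ} (hd0 : 0 ≤ d) (hd : d < m - β)
    (hc : c * N ≤ m - β) (hβ : 0 ≤ β) (ht : 0 ≤ t) (hsN : s ≤ N) (htN : t ≤ N)
    (he : 0 ≤ e) (h₁ : s * (m - β) ≤ e + s * (N - t)) (h₂ : t * (m - β) ≤ e + t * (N - s))
    (h₃ : s * (m - β) ≤ e + (N - t) * (m + β))
    (hexp : c * N ≤ s → c * N ≤ t → N < s + t → γ * N ^ 2 ≤ e)
    (hgap : 2 * β * N * d ≤ (m - β - d) * (γ * N ^ 2)) :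
    d * (s + t - N) ≤ e := by
  rcases le_or_gt (s + t) N with hk | hk
  · nlinarith
  rcases lt_or_ge s (c * N) with hsc | hsc
  · nlinarith [mul_nonneg (sub_nonneg.2 htN) (by linarith : 0 ≤ m - β - s)]
  rcases lt_or_ge t (c * N) with htc | htc
  · nlinarith [mul_nonneg (sub_nonneg.2 hsN) (by linarith : 0 ≤ m - β - t)]
  rcases le_or_gt (2 * β * N) ((s + t - N) * (m - β - d)) with hK | hK
  · nlinarith [mul_nonneg ht hβ]
  · nlinarith [hexp hsc htc hk, mul_le_mul_of_nonneg_left hK.le hd0]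

section Counting

variable {V : Type*} [Fintype V] [DecidableEq V] {E : Finset (V × V)} {m β : ℝ}

lemma card_arcs_bounds
    (hdeg : ∀ v, m - β ≤ (#{p ∈ E | p.2 = v} : ℝ) ∧ (#{p ∈ E | p.2 = v} : ℝ) ≤ m + β ∧
      m - β ≤ (#{p ∈ E | p.1 = v} : ℝ) ∧ (#{p ∈ E | p.1 = v} : ℝ) ≤ m + β)
    (S T : Finset V) :
    #S * (m - β) ≤ #{p ∈ E | p.1 ∈ S ∧ p.2 ∈ T} + #S * (Fintype.card V - #T) ∧
    #T * (m - β) ≤ #{p ∈ E | p.1 ∈ S ∧ p.2 ∈ T} + #T * (Fintype.card V - #S) ∧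
    #S * (m - β) ≤ #{p ∈ E | p.1 ∈ S ∧ p.2 ∈ T} + (Fintype.card V - #T) * (m + β) := by
  have hS : #S * (m - β) ≤ #{p ∈ E | p.1 ∈ S} := by
    rw [← sum_card_fiberwise_eq_card_filter, Nat.cast_sum, ← nsmul_eq_mul]
    exact card_nsmul_le_sum _ _ _ fun v _ => (hdeg v).2.2.1
  have hT : #T * (m - β) ≤ #{p ∈ E | p.2 ∈ T} := by
    rw [← sum_card_fiberwise_eq_card_filter, Nat.cast_sum, ← nsmul_eq_mul]
    exact card_nsmul_le_sum _ _ _ fun v _ => (hdeg v).1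
  have hTc : (#{p ∈ E | p.2 ∈ Tᶜ} : ℝ) ≤ #Tᶜ * (m + β) := by
    rw [← sum_card_fiberwise_eq_card_filter, Nat.cast_sum, ← nsmul_eq_mul]
    exact sum_le_card_nsmul _ _ _ fun v _ => (hdeg v).2.1
  have hsplitS := card_filter_and_add_card_filter_and_not E (·.1 ∈ S) (·.2 ∈ T)
  have hsplitT := card_filter_and_add_card_filter_and_not E (·.2 ∈ T) (·.1 ∈ S)
  have hStc := card_arcs_le_mul E S Tᶜ
  have hScT := card_arcs_le_mul E Sᶜ T
  have hStcU : #{p ∈ E | p.1 ∈ S ∧ p.2 ∈ Tᶜ} ≤ #{p ∈ E | p.2 ∈ Tᶜ} :=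
    card_le_card fun p hp => by simp only [mem_filter] at hp ⊢; exact ⟨hp.1, hp.2.2⟩
  have hcomm : #{p ∈ E | p.2 ∈ T ∧ p.1 ∈ S} = #{p ∈ E | p.1 ∈ S ∧ p.2 ∈ T} := by
    simp only [and_comm]
  simp only [mem_compl, and_comm (a := _ ∉ S)] at hsplitS hsplitT hStc hScT hStcU hTc
  rw [hcomm] at hsplitT
  have hTcard : (#Tᶜ : ℝ) = Fintype.card V - #T := by
    rw [card_compl, Nat.cast_sub (card_le_univ T)]
  have hScard : (#Sᶜ : ℝ) = Fintype.card V - #S := by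
    rw [card_compl, Nat.cast_sub (card_le_univ S)]
  rify at hsplitS hsplitT hStc hScT hStcU
  rw [hTcard] at hStc hTc
  rw [hScard] at hScT
  refine ⟨by linarith, by linarith, by linarith⟩

theorem cut_condition_of_degree_bounds {d : ℕ} {c γ : ℝ}
    (hdeg : ∀ v, m - β ≤ (#{p ∈ E | p.2 = v} : ℝ) ∧ (#{p ∈ E | p.2 = v} : ℝ) ≤ m + β ∧
      m - β ≤ (#{p ∈ E | p.1 = v} : ℝ) ∧ (#{p ∈ E | p.1 = v} : ℝ) ≤ m + β)
    (hexp : ∀ S T : Finset V, c * Fintype.card V ≤ #S → (Fintype.card V : ℝ) / 2 ≤ #T →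
      γ * Fintype.card V ^ 2 ≤ #{p ∈ E | p.1 ∈ S ∧ p.2 ∈ T} ∧
        γ * Fintype.card V ^ 2 ≤ #{p ∈ E | p.1 ∈ T ∧ p.2 ∈ S})
    (hd : (d : ℝ) < m - β) (hc : c * Fintype.card V ≤ m - β) (hβ : 0 ≤ β)
    (hgap : 2 * β * Fintype.card V * d ≤ (m - β - d) * (γ * Fintype.card V ^ 2))
    (S T : Finset V) :
    d * (#S + #T) ≤ #{p ∈ E | p.1 ∈ S ∧ p.2 ∈ T} + d * Fintype.card V := by
  obtain ⟨h₁, h₂, h₃⟩ := card_arcs_bounds hdeg S T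
  have hexpST : c * Fintype.card V ≤ #S → c * Fintype.card V ≤ #T →
      (Fintype.card V : ℝ) < #S + #T → γ * Fintype.card V ^ 2 ≤ #{p ∈ E | p.1 ∈ S ∧ p.2 ∈ T} := by
    intro hS hT hST
    rcases le_or_gt ((Fintype.card V : ℝ) / 2) #T with hT2 | hT2
    · exact (hexp S T hS hT2).1
    · exact (hexp T S hT (by linarith)).2
  have key := cut_inequality d.cast_nonneg hd hc hβ (#T).cast_nonneg
    (by exact_mod_cast card_le_univ S) (by exact_mod_cast card_le_univ T) (Nat.cast_nonneg _)
    h₁ h₂ h₃ hexpST hgap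
  have : (d : ℝ) * (#S + #T) ≤ #{p ∈ E | p.1 ∈ S ∧ p.2 ∈ T} + d * Fintype.card V := by linarith
  exact_mod_cast this

end Counting

section Digraph

variable {V : Type*} [DecidableEq V] {D : Digraph V} {E : Finset (V × V)}

lemma outDeg_eq_card_filter (hE : ∀ u v, (u, v) ∈ E ↔ D.Adj u v) (v : V) :
    outDeg D v = #{p ∈ E | p.1 = v} := by
  rw [outDeg, ← Set.ncard_image_of_injective _ (Prod.mk_right_injective v),
    ← Set.ncard_coe_finset]
  congr 1
  ext ⟨a, b⟩
  simp only [Set.mem_image, Set.mem_ofPred_eq, Prod.mk.injEq, coe_filter, hE]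
  grind

lemma inDeg_eq_card_filter (hE : ∀ u v, (u, v) ∈ E ↔ D.Adj u v) (v : V) :
    inDeg D v = #{p ∈ E | p.2 = v} := by
  rw [inDeg, ← Set.ncard_image_of_injective _ (Prod.mk_left_injective v),
    ← Set.ncard_coe_finset]
  congr 1
  ext ⟨a, b⟩
  simp only [Set.mem_image, Set.mem_ofPred_eq, Prod.mk.injEq, coe_filter, hE]
  grind

lemma dEdges_coe_eq_card_filter (hE : ∀ u v, (u, v) ∈ E ↔ D.Adj u v) (S T : Finset V) :
    dEdges D S T = #{p ∈ E | p.1 ∈ S ∧ p.2 ∈ T} := by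
  rw [dEdges, ← Set.ncard_coe_finset]
  congr 1
  ext ⟨a, b⟩
  simp [hE]

end Digraph

lemma eventually_rpow_two_thirds_le {c : ℝ} (hc : 0 < c) :
    ∀ᶠ n : ℕ in atTop, (n : ℝ) ^ ((2 : ℝ) / 3) ≤ c * n := by
  have hlim := (tendsto_rpow_neg_atTop (by norm_num : (0 : ℝ) < 1 / 3)).comp
    tendsto_natCast_atTop_atTop
  filter_upwards [hlim.eventually (gt_mem_nhds hc), eventually_ge_atTop 1] with n hn hn1
  have hpos : (0 : ℝ) < n := by exact_mod_cast hn1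
  calc (n : ℝ) ^ ((2 : ℝ) / 3) = (n : ℝ) ^ (-(1 / 3 : ℝ)) * n := by
        rw [← Real.rpow_add_one hpos.ne']
        norm_num
    _ ≤ c * n := by gcongr; exact hn.le

lemma cut_parameters {ε₀ γ₀ c₀ N β d : ℝ} (hε₀ : 0 < ε₀) (hγ₀ : 0 < γ₀) (hc₀ : ε₀ ≤ c₀)
    (hβ : 0 ≤ β) (hβε : β ≤ ε₀ / 8 * N) (hβγ : β ≤ ε₀ * γ₀ / (24 * c₀) * N) (hN : 8 / ε₀ ≤ N)
    (hd : d ≤ (c₀ - ε₀) * N / 2 + 1) :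
    d < c₀ * N / 2 - β ∧ c₀ / 3 * N ≤ c₀ * N / 2 - β ∧
      2 * β * N * d ≤ (c₀ * N / 2 - β - d) * (γ₀ / 3 * N ^ 2) := by
  have hc₀pos : 0 < c₀ := hε₀.trans_le hc₀
  have hεN : 8 ≤ ε₀ * N := by rwa [div_le_iff₀ hε₀, mul_comm] at hN
  have hN0 : 0 ≤ N := (div_pos (by norm_num) hε₀).le.trans hN
  have hεc : ε₀ * N ≤ c₀ * N := mul_le_mul_of_nonneg_right hc₀ hN0
  have hcβ : c₀ * β ≤ ε₀ * γ₀ * N / 24 := by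
    calc c₀ * β ≤ c₀ * (ε₀ * γ₀ / (24 * c₀) * N) := by gcongr
      _ = ε₀ * γ₀ * N / 24 := by field_simp
  refine ⟨by linarith, by linarith, ?_⟩
  calc 2 * β * N * d ≤ 2 * β * N * (c₀ * N / 2) := by gcongr; linarith
    _ = c₀ * β * N ^ 2 := by ring
    _ ≤ ε₀ * γ₀ * N / 24 * N ^ 2 := by gcongr
    _ ≤ ε₀ * N / 4 * (γ₀ / 3 * N ^ 2) := by
        have : 0 ≤ ε₀ * γ₀ * N * N ^ 2 := by positivity
        nlinarith
    _ ≤ (c₀ * N / 2 - β - d) * (γ₀ / 3 * N ^ 2) := by gcongr; linarith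

/-- digraph form of Lemma 1.4. Let `ε₀, γ₀ > 0`, `c₀ ≥ ε₀`,
`d = ⌈(c₀ - ε₀) n / 2⌉`, and `n` sufficiently large. If `D` is a digraph on `n`
vertices with all in- and out-degrees between `c₀ n / 2 - n^(2/3)` and
`c₀ n / 2 + n^(2/3)`, with at least `γ₀ n² / 3` edges in each direction between any
two sets `A, B` with `|A| ≥ c₀ n / 3` and `|B| ≥ n / 2`, then `D` contains a spanning
`d`-regular subdigraph. -/
theorem regular_spanning_subdigraph (ε₀ γ₀ c₀ : ℝ) (hε₀ : 0 < ε₀) (hγ₀ : 0 < γ₀)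
    (hc₀ : ε₀ ≤ c₀) :
    ∃ n₀ : ℕ, ∀ n : ℕ, n₀ ≤ n → ∀ D : Digraph (Fin n),
      (∀ v : Fin n,
        c₀ * (n : ℝ) / 2 - (n : ℝ) ^ ((2 : ℝ) / 3) ≤ (inDeg D v : ℝ) ∧
        (inDeg D v : ℝ) ≤ c₀ * (n : ℝ) / 2 + (n : ℝ) ^ ((2 : ℝ) / 3) ∧
        c₀ * (n : ℝ) / 2 - (n : ℝ) ^ ((2 : ℝ) / 3) ≤ (outDeg D v : ℝ) ∧
        (outDeg D v : ℝ) ≤ c₀ * (n : ℝ) / 2 + (n : ℝ) ^ ((2 : ℝ) / 3)) →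
      (∀ A B : Set (Fin n), c₀ * (n : ℝ) / 3 ≤ (A.ncard : ℝ) →
        (n : ℝ) / 2 ≤ (B.ncard : ℝ) →
        γ₀ * (n : ℝ) ^ 2 / 3 ≤ (dEdges D A B : ℝ) ∧
        γ₀ * (n : ℝ) ^ 2 / 3 ≤ (dEdges D B A : ℝ)) →
      ∃ D' : Digraph (Fin n), (∀ u v : Fin n, D'.Adj u v → D.Adj u v) ∧
        ∀ v : Fin n, inDeg D' v = ⌈(c₀ - ε₀) * (n : ℝ) / 2⌉₊ ∧
          outDeg D' v = ⌈(c₀ - ε₀) * (n : ℝ) / 2⌉₊ := by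
  have hc₀pos : 0 < c₀ := hε₀.trans_le hc₀
  obtain ⟨n₀, hn₀⟩ := eventually_atTop.1
    ((eventually_rpow_two_thirds_le (c := ε₀ / 8) (by positivity)).and
      ((eventually_rpow_two_thirds_le (c := ε₀ * γ₀ / (24 * c₀)) (by positivity)).and
        (tendsto_natCast_atTop_atTop.eventually_ge_atTop (8 / ε₀))))
  refine ⟨n₀, fun n hn D hdeg hexp => ?_⟩
  classical
  obtain ⟨hβε, hβγ, hN⟩ := hn₀ n hn
  obtain ⟨hd, hc, hgap⟩ := cut_parameters hε₀ hγ₀ hc₀ (by positivity) hβε hβγ hN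
    (Nat.ceil_lt_add_one (by have := sub_nonneg.2 hc₀; positivity)).le
  set E : Finset (Fin n × Fin n) := {p | D.Adj p.1 p.2}
  have hE : ∀ u v, (u, v) ∈ E ↔ D.Adj u v := by simp [E]
  have hcut := cut_condition_of_degree_bounds (E := E) (m := c₀ * n / 2)
    (β := (n : ℝ) ^ ((2 : ℝ) / 3)) (c := c₀ / 3) (γ := γ₀ / 3)
    (fun v => by simpa only [inDeg_eq_card_filter hE, outDeg_eq_card_filter hE] using hdeg v)
    (fun S T hS hT => by
      have := hexp S T (by simp at hS ⊢; linarith) (by simpa using hT)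
      simp only [dEdges_coe_eq_card_filter hE, Fintype.card_fin] at this ⊢
      constructor <;> linarith [this.1, this.2])
    (by simpa using hd) (by simpa using hc) (by positivity) (by simpa using hgap)
  obtain ⟨F, hFE, hF⟩ := exists_factor_of_cut hcut
  refine ⟨⟨fun u v => (u, v) ∈ F⟩, fun u v h => (hE u v).1 (hFE h), fun v => ?_⟩
  rw [inDeg_eq_card_filter (fun _ _ => Iff.rfl), outDeg_eq_card_filter (fun _ _ => Iff.rfl)]
  exact hF v
end
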